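/- arXiv:2605.18983 — 4 statements merged into one kernel-verified Lean document; each statement's English description precedes it below -/
import Mathlib

section
/- Let R be a commutative ring and V, V' direct summands of a finitely generated projective R-module E with I_V = I_{V'}, where I_V = {φ ∈ End_R(E) : range φ ⊆ V}. If V and V' are direct summands, then V = V'. More precisely, for a direct summand V of E one has V = ⨆_{φ ∈ I_V} range φ, so the assignment V ↦ I_V is injective on direct summands. -/
/-- The right ideal of endomorphisms whose range is contained in `V`. -/
def idealOf {R E : Type*} [CommRing R] [AddCommGroup E] [Module R E]
    (V : Submodule R E) : Submodule R (Module.End R E) where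
  carrier := {φ | ∀ x, φ x ∈ V}
  add_mem' := fun hf hg x => V.add_mem (hf x) (hg x)
  zero_mem' := fun _ => V.zero_mem
  smul_mem' := fun c _ hf x => V.smul_mem c (hf x)

lemma idealOf_recover {R E : Type*} [CommRing R] [AddCommGroup E] [Module R E]
    (V : Submodule R E) (hV : ∃ W, IsCompl V W) :
    V = ⨆ φ ∈ idealOf V, LinearMap.range φ := by
  obtain ⟨W, hW⟩ := hV
  set π : Module.End R E := V.subtype ∘ₗ V.linearProjOfIsCompl W hW with hπ
  have hπmem : π ∈ idealOf V := fun x => (V.linearProjOfIsCompl W hW x).2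
  apply le_antisymm
  · intro v hv
    have : v ∈ LinearMap.range π := ⟨v, by
      simp [hπ, Submodule.linearProjOfIsCompl_apply_left hW ⟨v, hv⟩]
      exact congrArg Subtype.val (Submodule.linearProjOfIsCompl_apply_left hW ⟨v, hv⟩)⟩
    exact (le_iSup₂ (f := fun φ _ => LinearMap.range φ) π hπmem : _ ≤ _) this
  · refine iSup₂_le fun φ hφ => ?_
    rintro _ ⟨x, rfl⟩
    exact hφ x

/-- For a direct summand `V` of a finitely generated projective module `E`, one
recovers `V` as the join of the ranges of the elements of `I_V`; consequently
the assignment `V ↦ I_V` is injective on direct summands. -/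
theorem idealOf_recover_and_injective {R E : Type*} [CommRing R] [AddCommGroup E]
    [Module R E] [Module.Finite R E] [Module.Projective R E]
    (V : Submodule R E) (hV : ∃ W, IsCompl V W) :
    (V = ⨆ φ ∈ idealOf V, LinearMap.range φ) ∧
      ∀ V' : Submodule R E, (∃ W', IsCompl V' W') → idealOf V = idealOf V' → V = V' := by
  refine ⟨idealOf_recover V hV, fun V' hV' h => ?_⟩
  rw [idealOf_recover V hV, idealOf_recover V' hV', h]
end

section
/- Let A be an associative unital algebra over a commutative ring R, let e₁,...,e_{ℓ+1} be pairwise orthogonal idempotents of A summing to 1, and let λ(t) = Σᵢ t^{-i} eᵢ ∈ A[t,t⁻¹]. Then λ(t) is invertible with inverse Σᵢ tⁱ eᵢ, and for any h ∈ A, the element λ(t) h λ(t)⁻¹ lies in A[t] ⊆ A[t,t⁻¹] if and only if eₚ h e_q = 0 for all indices p > q. -/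
open LaurentPolynomial

private lemma CT_mul_CT {A : Type*} [Ring A] (a b : A) (m n : ℤ) :
    (C a * T m) * (C b * T n) = C (a * b) * T (m + n) := by
  rw [← single_eq_C_mul_T, ← single_eq_C_mul_T, ← single_eq_C_mul_T,
    AddMonoidAlgebra.single_mul_single]

private lemma sum_CT_mul_sum_CT {A : Type*} [Ring A] (ℓ : ℕ) (e : Fin (ℓ + 1) → A)
    (hidem : ∀ i, e i * e i = e i)
    (horth : ∀ i j, i ≠ j → e i * e j = 0)
    (hsum : ∑ i, e i = 1) (m n : Fin (ℓ + 1) → ℤ) (h0 : ∀ i, m i + n i = 0) :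
    (∑ i, C (e i) * T (m i)) * (∑ i, C (e i) * T (n i)) = 1 := by
  rw [Finset.sum_mul_sum]
  have : ∀ i ∈ Finset.univ, ∑ j, (C (e i) * T (m i)) * (C (e j) * T (n j))
      = (C (e i) : LaurentPolynomial A) := by
    intro i _
    rw [Finset.sum_eq_single i]
    · rw [CT_mul_CT, hidem, h0, T_zero, mul_one]
    · intro j _ hji
      rw [CT_mul_CT, horth i j (Ne.symm hji), map_zero, zero_mul]
    · simp
  rw [Finset.sum_congr rfl this, ← map_sum, hsum, map_one]

/-- For pairwise orthogonal idempotents `e₁,...,e_{ℓ+1}` of an associative unital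
`R`-algebra `A` summing to `1`, the Laurent polynomial `λ(t) = Σᵢ t^{-i} eᵢ` is
invertible with inverse `Σᵢ tⁱ eᵢ`, and for `h ∈ A` the conjugate `λ(t) h λ(t)⁻¹`
is a polynomial in `t` if and only if `eₚ h e_q = 0` for all `p > q`. -/
theorem laurent_conjugate_polynomial_iff {R A : Type*} [CommRing R] [Ring A]
    [Algebra R A] (ℓ : ℕ) (e : Fin (ℓ + 1) → A)
    (hidem : ∀ i, e i * e i = e i)
    (horth : ∀ i j, i ≠ j → e i * e j = 0)
    (hsum : ∑ i, e i = 1) :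
    (∑ i, C (e i) * T (-(((i : ℕ) : ℤ) + 1))) * (∑ i, C (e i) * T (((i : ℕ) : ℤ) + 1)) = 1 ∧
    (∑ i, C (e i) * T (((i : ℕ) : ℤ) + 1)) * (∑ i, C (e i) * T (-(((i : ℕ) : ℤ) + 1))) = 1 ∧
    ∀ h : A,
      ((∃ p : Polynomial A, Polynomial.toLaurent p =
          (∑ i, C (e i) * T (-(((i : ℕ) : ℤ) + 1))) * C h *
            (∑ i, C (e i) * T (((i : ℕ) : ℤ) + 1))) ↔
        ∀ p q : Fin (ℓ + 1), q < p → e p * h * e q = 0) := by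
  refine ⟨sum_CT_mul_sum_CT ℓ e hidem horth hsum _ _ (fun i => by ring),
    sum_CT_mul_sum_CT ℓ e hidem horth hsum _ _ (fun i => by ring), fun h => ?_⟩
  have hf : (∑ i, C (e i) * T (-(((i : ℕ) : ℤ) + 1))) * C h *
      (∑ i, C (e i) * T (((i : ℕ) : ℤ) + 1))
      = ∑ i, ∑ j, C (e i * h * e j) * T (((j : ℕ) : ℤ) - ((i : ℕ) : ℤ)) := by
    rw [Finset.sum_mul, Finset.sum_mul]
    refine Finset.sum_congr rfl fun i _ => ?_
    rw [Finset.mul_sum]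
    refine Finset.sum_congr rfl fun j _ => ?_
    have h1 : (C h : LaurentPolynomial A) = C h * T 0 := by rw [T_zero, mul_one]
    have h2 : -(((i : ℕ) : ℤ) + 1) + 0 + (((j : ℕ) : ℤ) + 1) = ((j : ℕ) : ℤ) - ((i : ℕ) : ℤ) := by
      ring
    rw [h1, CT_mul_CT, CT_mul_CT, h2]
  rw [hf]
  constructor
  · rintro ⟨P, hP⟩ p q hqp
    set d : ℤ := ((q : ℕ) : ℤ) - ((p : ℕ) : ℤ) with hd
    have hdneg : d < 0 := by
      have : (q : ℕ) < (p : ℕ) := hqp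
      omega
    have hL : (Polynomial.toLaurent P).coeff d = 0 := by
      rw [LaurentPolynomial.coeff_toLaurent]
      exact Finsupp.mapDomain_notin_range _ _ (by
        rintro ⟨n, hn⟩
        have hc : (Nat.castEmbedding n : ℤ) = (n : ℤ) := rfl
        omega)
    have hS : (∑ i : Fin (ℓ+1), ∑ j : Fin (ℓ+1),
        if (((j : ℕ) : ℤ) - ((i : ℕ) : ℤ)) = d then e i * h * e j else 0) = 0 := by
      have happ : ((∑ i : Fin (ℓ+1), ∑ j : Fin (ℓ+1),
          C (e i * h * e j) * T (((j : ℕ) : ℤ) - ((i : ℕ) : ℤ))) : LaurentPolynomial A).coeff d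
          = ∑ i : Fin (ℓ+1), ∑ j : Fin (ℓ+1),
            if (((j : ℕ) : ℤ) - ((i : ℕ) : ℤ)) = d then e i * h * e j else 0 := by
        simp_rw [← single_eq_C_mul_T]
        rw [AddMonoidAlgebra.coeff_sum, Finset.sum_apply']
        refine Finset.sum_congr rfl fun i _ => ?_
        rw [AddMonoidAlgebra.coeff_sum, Finset.sum_apply']
        exact Finset.sum_congr rfl fun j _ => by
          rw [AddMonoidAlgebra.coeff_single, Finsupp.single_apply]
      rw [← happ, ← hP, hL]
    have key : e p * h * e q = e p * (∑ i : Fin (ℓ+1), ∑ j : Fin (ℓ+1),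
        if (((j : ℕ) : ℤ) - ((i : ℕ) : ℤ)) = d then e i * h * e j else 0) * e q := by
      rw [Finset.mul_sum, Finset.sum_mul, Finset.sum_eq_single p]
      · rw [Finset.mul_sum, Finset.sum_mul, Finset.sum_eq_single q]
        · rw [if_pos rfl,
            (by simp only [mul_assoc] :
              e p * (e p * h * e q) * e q = e p * e p * h * (e q * e q)),
            hidem p, hidem q]
        · intro j _ hjq
          by_cases hc : (((j : ℕ) : ℤ) - ((p : ℕ) : ℤ)) = d
          · rw [if_pos hc]
            simp only [mul_assoc]
            rw [horth j q hjq]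
            simp
          · rw [if_neg hc]; simp
        · intro habs
          exact absurd (Finset.mem_univ q) habs
      · intro i _ hip
        rw [Finset.mul_sum, Finset.sum_mul]
        refine Finset.sum_eq_zero fun j _ => ?_
        by_cases hc2 : (((j : ℕ) : ℤ) - ((i : ℕ) : ℤ)) = d
        · rw [if_pos hc2]
          simp only [← mul_assoc]
          rw [horth p i (Ne.symm hip)]
          simp
        · rw [if_neg hc2]; simp
      · intro habs
        exact absurd (Finset.mem_univ p) habs
    rw [key, hS, mul_zero, zero_mul]
  · intro hz
    refine ⟨∑ i : Fin (ℓ+1), ∑ j : Fin (ℓ+1),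
      Polynomial.C (e i * h * e j) * Polynomial.X ^ ((j : ℕ) - (i : ℕ)), ?_⟩
    rw [map_sum]
    refine Finset.sum_congr rfl fun i _ => ?_
    rw [map_sum]
    refine Finset.sum_congr rfl fun j _ => ?_
    rw [Polynomial.toLaurent_C_mul_X_pow]
    by_cases hij : (i : ℕ) ≤ (j : ℕ)
    · rw [Nat.cast_sub hij]
    · rw [hz i j (by rw [Fin.lt_def]; omega)]
      simp
end

section
/- Let A be an associative unital ring, e₁,...,e_{ℓ+1} pairwise orthogonal idempotents of A summing to 1, and set f_k = e₁ + ... + e_k. Let h ∈ Aˣ. If eₚ h e_q = 0 and eₚ h⁻¹ e_q = 0 for all p > q, then h f_k A h⁻¹ = f_k A for all k. Conversely, if h f_k A h⁻¹ = f_k A for all k, then eₚ h e_q = 0 for all p > q. -/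
/-- The partial sum `f_k = e₁ + ... + e_k` of a tuple of ring elements. -/
def partialSum {A : Type*} [Ring A] {ℓ : ℕ} (e : Fin (ℓ + 1) → A) (k : ℕ) : A :=
  ∑ i ∈ Finset.univ.filter (fun i : Fin (ℓ + 1) => (i : ℕ) < k), e i

section Aux

variable {A : Type*} [Ring A] {ℓ : ℕ} (e : Fin (ℓ + 1) → A)

lemma pS_mul_e (hidem : ∀ i, e i * e i = e i)
    (horth : ∀ i j, i ≠ j → e i * e j = 0) (k : ℕ) (i : Fin (ℓ + 1)) :
    partialSum e k * e i = if (i : ℕ) < k then e i else 0 := by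
  rw [partialSum, Finset.sum_mul]
  rcases lt_or_ge (i : ℕ) k with hik | hik
  · rw [if_pos hik, Finset.sum_eq_single i]
    · exact hidem i
    · intro j _ hji; exact horth j i hji
    · intro hi; exact absurd (Finset.mem_filter.mpr ⟨Finset.mem_univ i, hik⟩) hi
  · rw [if_neg (not_lt.mpr hik)]
    apply Finset.sum_eq_zero
    intro j hj
    apply horth j i
    intro hji
    subst hji
    exact absurd (Finset.mem_filter.mp hj).2 (not_lt.mpr hik)

lemma e_mul_pS (hidem : ∀ i, e i * e i = e i)
    (horth : ∀ i j, i ≠ j → e i * e j = 0) (k : ℕ) (i : Fin (ℓ + 1)) :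
    e i * partialSum e k = if (i : ℕ) < k then e i else 0 := by
  rw [partialSum, Finset.mul_sum]
  rcases lt_or_ge (i : ℕ) k with hik | hik
  · rw [if_pos hik, Finset.sum_eq_single i]
    · exact hidem i
    · intro j _ hji; exact horth i j (Ne.symm hji)
    · intro hi; exact absurd (Finset.mem_filter.mpr ⟨Finset.mem_univ i, hik⟩) hi
  · rw [if_neg (not_lt.mpr hik)]
    apply Finset.sum_eq_zero
    intro j hj
    apply horth i j
    intro hji
    subst hji
    exact absurd (Finset.mem_filter.mp hj).2 (not_lt.mpr hik)

lemma pS_idem (hidem : ∀ i, e i * e i = e i)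
    (horth : ∀ i j, i ≠ j → e i * e j = 0) (k : ℕ) :
    partialSum e k * partialSum e k = partialSum e k := by
  nth_rewrite 1 [partialSum]
  rw [Finset.sum_mul]
  trans ∑ j ∈ Finset.univ.filter (fun i : Fin (ℓ + 1) => (i : ℕ) < k), e j
  · apply Finset.sum_congr rfl
    intro j hj
    rw [e_mul_pS e hidem horth, if_pos (Finset.mem_filter.mp hj).2]
  · rfl

lemma partialSum_compl (hsum : ∑ i, e i = 1) (k : ℕ) :
    (1 : A) - partialSum e k =
      ∑ i ∈ Finset.univ.filter (fun i : Fin (ℓ + 1) => ¬ (i : ℕ) < k), e i := by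
  rw [← hsum, partialSum,
    ← Finset.sum_filter_add_sum_filter_not Finset.univ (fun i : Fin (ℓ + 1) => (i : ℕ) < k) e]
  abel

lemma mul_pS_eq (hsum : ∑ i, e i = 1) (u : A)
    (hu : ∀ p q : Fin (ℓ + 1), q < p → e p * u * e q = 0) (k : ℕ) :
    u * partialSum e k = partialSum e k * (u * partialSum e k) := by
  have h0 : (1 - partialSum e k) * u * partialSum e k = 0 := by
    rw [partialSum_compl e hsum, Finset.sum_mul, Finset.sum_mul]
    apply Finset.sum_eq_zero
    intro i hi
    rw [partialSum, Finset.mul_sum]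
    apply Finset.sum_eq_zero
    intro j hj
    have h1 : ¬ (i : ℕ) < k := (Finset.mem_filter.mp hi).2
    have h2 : (j : ℕ) < k := (Finset.mem_filter.mp hj).2
    exact hu i j (by rw [Fin.lt_def]; omega)
  rw [sub_mul, one_mul, sub_mul, mul_assoc] at h0
  exact sub_eq_zero.mp h0

end Aux

/-- Let `e₁,...,e_{ℓ+1}` be pairwise orthogonal idempotents of a ring `A` summing
to `1`, `f_k = e₁+...+e_k`, and `h ∈ Aˣ`.  If `eₚ h e_q = 0` and `eₚ h⁻¹ e_q = 0`
for all `p > q`, then `h f_k A h⁻¹ = f_k A` for all `k`; conversely, if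
`h f_k A h⁻¹ = f_k A` for all `k`, then `eₚ h e_q = 0` for all `p > q`. -/
theorem conjugation_stabilizes_partialSum_ideals_iff {A : Type*} [Ring A] (ℓ : ℕ)
    (e : Fin (ℓ + 1) → A)
    (hidem : ∀ i, e i * e i = e i)
    (horth : ∀ i j, i ≠ j → e i * e j = 0)
    (hsum : ∑ i, e i = 1)
    (h : Aˣ) :
    ((∀ p q : Fin (ℓ + 1), q < p → e p * (h : A) * e q = 0) →
      (∀ p q : Fin (ℓ + 1), q < p → e p * (↑h⁻¹ : A) * e q = 0) →
      ∀ k : ℕ, (fun x => (h : A) * x * (↑h⁻¹ : A)) '' {x | ∃ a, x = partialSum e k * a} =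
        {x | ∃ a, x = partialSum e k * a}) ∧
    ((∀ k : ℕ, (fun x => (h : A) * x * (↑h⁻¹ : A)) '' {x | ∃ a, x = partialSum e k * a} =
        {x | ∃ a, x = partialSum e k * a}) →
      ∀ p q : Fin (ℓ + 1), q < p → e p * (h : A) * e q = 0) := by
  constructor
  · intro hH hHinv k
    have key1 : (h : A) * partialSum e k = partialSum e k * ((h : A) * partialSum e k) :=
      mul_pS_eq e hsum _ hH k
    have key2 : (↑h⁻¹ : A) * partialSum e k = partialSum e k * ((↑h⁻¹ : A) * partialSum e k) :=
      mul_pS_eq e hsum _ hHinv k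
    ext x
    simp only [Set.mem_image, Set.mem_setOf_eq]
    constructor
    · rintro ⟨y, ⟨a, rfl⟩, rfl⟩
      refine ⟨(h : A) * (partialSum e k * a) * (↑h⁻¹ : A), ?_⟩
      conv_lhs => rw [← mul_assoc, key1]
      simp [mul_assoc]
    · rintro ⟨a, rfl⟩
      refine ⟨(↑h⁻¹ : A) * (partialSum e k * a) * (h : A), ⟨(↑h⁻¹ : A) * (partialSum e k * a) * (h : A), ?_⟩, ?_⟩
      · conv_lhs => rw [← mul_assoc, key2]
        simp [mul_assoc]
      · simp [mul_assoc, Units.mul_inv_cancel_left]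
  · intro hstab p q hqp
    set k : ℕ := (q : ℕ) + 1 with hk
    have hq : partialSum e k * e q = e q := by
      rw [pS_mul_e e hidem horth, if_pos (Nat.lt_succ_self _)]
    have hmem : ∃ a, (h : A) * e q * (↑h⁻¹ : A) = partialSum e k * a := by
      have : (h : A) * e q * (↑h⁻¹ : A) ∈
          (fun x => (h : A) * x * (↑h⁻¹ : A)) '' {x | ∃ a, x = partialSum e k * a} :=
        ⟨e q, ⟨e q, hq.symm⟩, rfl⟩
      rwa [hstab k] at this
    obtain ⟨a, ha⟩ := hmem
    have h0 : (1 - partialSum e k) * ((h : A) * e q * (↑h⁻¹ : A)) = 0 := by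
      rw [ha, sub_mul, one_mul, ← mul_assoc, pS_idem e hidem horth, sub_self]
    have h1 : (1 - partialSum e k) * ((h : A) * e q) = 0 := by
      have := congrArg (· * (h : A)) h0
      simpa [mul_assoc, Units.inv_mul_cancel_left] using this
    have hpf : e p * partialSum e k = 0 := by
      rw [e_mul_pS e hidem horth, if_neg]
      have : (q : ℕ) < (p : ℕ) := hqp
      omega
    have h2 : e p * (1 - partialSum e k) = e p := by
      rw [mul_sub, mul_one, hpf, sub_zero]
    rw [← h2, mul_assoc, mul_assoc, h1, mul_zero]
end

section
/- Let R be a commutative ring, I = I₁ × I₂ a right ideal of Mat_d(R) × Mat_d(R), where I₁ = Hom(R^d, V₁) and I₂ = Hom(R^d, V₂) for direct summands V₁, V₂ ⊆ R^d (i.e., Iⱼ consists of matrices whose columns lie in Vⱼ). Then the image under the switch-transpose τ_d of the left annihilator of I equals Hom(R^d, V₂^⊥) × Hom(R^d, V₁^⊥), where V^⊥ = {x ∈ R^d : xᵀv = 0 ∀ v ∈ V} and the left annihilator of I is {b : b·I = 0}. -/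
/-- The orthogonal complement `V^⊥ = {x | xᵀv = 0 for all v ∈ V}`. -/
def perp {R : Type*} [CommRing R] {d : ℕ} (V : Submodule R (Fin d → R)) :
    Submodule R (Fin d → R) where
  carrier := {x | ∀ v ∈ V, dotProduct x v = 0}
  add_mem' := by
    intro x y hx hy v hv
    rw [add_dotProduct, hx v hv, hy v hv, add_zero]
  zero_mem' := by
    intro v hv
    rw [zero_dotProduct]
  smul_mem' := by
    intro c x hx v hv
    rw [smul_dotProduct, hx v hv, smul_zero]

/-- `Hom(R^d, V)`, realized as the set of matrices all of whose columns lie in `V`;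
it is a right ideal of `Mat_d(R)`. -/
def colIdeal {R : Type*} [CommRing R] {d : ℕ} (V : Submodule R (Fin d → R)) :
    Set (Matrix (Fin d) (Fin d) R) :=
  {M | ∀ j : Fin d, (fun i => M i j) ∈ V}


lemma annih_iff {R : Type*} [CommRing R] {d : ℕ} (V : Submodule R (Fin d → R))
    (b : Matrix (Fin d) (Fin d) R) :
    (∀ M ∈ colIdeal V, b * M = 0) ↔ ∀ i : Fin d, (fun j => b i j) ∈ perp V := by
  constructor
  · intro h i v hv
    have hM : (Matrix.of fun k _ : Fin d => v k) ∈ colIdeal V := fun j => hv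
    have := congrFun (congrFun (h _ hM) i) i
    simpa [Matrix.mul_apply, dotProduct] using this
  · intro h M hM
    ext i j
    have := h i (fun k => M k j) (hM j)
    simpa [Matrix.mul_apply, dotProduct] using this

/-- For the right ideal `I = Hom(R^d,V₁) × Hom(R^d,V₂)` of `Mat_d(R) × Mat_d(R)`
with `V₁, V₂` direct summands, the image under the switch transpose
`τ_d(B₁,B₂) = (B₂ᵀ,B₁ᵀ)` of the left annihilator of `I` equals
`Hom(R^d, V₂^⊥) × Hom(R^d, V₁^⊥)`. -/
theorem switchTranspose_leftAnnihilator {R : Type*} [CommRing R] (d : ℕ)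
    (V₁ V₂ : Submodule R (Fin d → R))
    (h₁ : ∃ W, IsCompl V₁ W) (h₂ : ∃ W, IsCompl V₂ W) :
    (fun p : Matrix (Fin d) (Fin d) R × Matrix (Fin d) (Fin d) R =>
        (p.2.transpose, p.1.transpose)) ''
      {b : Matrix (Fin d) (Fin d) R × Matrix (Fin d) (Fin d) R |
        ∀ x ∈ (colIdeal V₁) ×ˢ (colIdeal V₂), b * x = 0} =
    (colIdeal (perp V₂)) ×ˢ (colIdeal (perp V₁)) := by
  ext p
  constructor
  · rintro ⟨b, hb, rfl⟩
    have hb1 : ∀ M ∈ colIdeal V₁, b.1 * M = 0 := by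
      intro M hM
      have := hb (M, (0 : Matrix (Fin d) (Fin d) R)) ⟨hM, fun j => V₂.zero_mem⟩
      exact congrArg Prod.fst this
    have hb2 : ∀ M ∈ colIdeal V₂, b.2 * M = 0 := by
      intro M hM
      have := hb ((0 : Matrix (Fin d) (Fin d) R), M) ⟨fun j => V₁.zero_mem, hM⟩
      exact congrArg Prod.snd this
    constructor
    · intro j
      exact (annih_iff V₂ b.2).mp hb2 j
    · intro j
      exact (annih_iff V₁ b.1).mp hb1 j
  · rintro ⟨hp1, hp2⟩
    refine ⟨(p.2.transpose, p.1.transpose), ?_, by simp⟩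
    rintro ⟨M₁, M₂⟩ ⟨hM₁, hM₂⟩
    have e1 : p.2.transpose * M₁ = 0 :=
      (annih_iff V₁ p.2.transpose).mpr (fun i => hp2 i) M₁ hM₁
    have e2 : p.1.transpose * M₂ = 0 :=
      (annih_iff V₂ p.1.transpose).mpr (fun i => hp1 i) M₂ hM₂
    exact Prod.ext e1 e2
end
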